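/- For the elementary n-qudit hypergraph state |G_n^m⟩ = CZ^m_{1…n} |+⟩^{⊗n} in local dimension d with hyperedge multiplicity m, the reduced density matrix of any single qudit has rank d/gcd(d,m). -/
import Mathlib


/-- The primitive `d`-th root of unity `ω = e^{2πi/d}`. -/
noncomputable def omega (d : ℕ) : ℂ := Complex.exp (2 * Real.pi * Complex.I / d)

/-- Amplitudes of the elementary qudit hypergraph state
`|G_n^m⟩ = CZ^m_{1…n} |+⟩^{⊗n}` on `n = k+1` qudits of dimension `d`, written with
the first qudit (value `a`) separated from the remaining `k` qudits (values `r`):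
the amplitude is `ω^{m·a·∏ᵢ rᵢ} / √(d^{k+1})`. -/
noncomputable def eleAmp (d k m : ℕ) (a : Fin d) (r : Fin k → Fin d) : ℂ :=
  (omega d) ^ (m * (a : ℕ) * ∏ i, ((r i : ℕ))) / ((Real.sqrt ((d : ℝ) ^ (k + 1)) : ℝ) : ℂ)

/-- The reduced density matrix of the first qudit of `|G_{k+1}^m⟩`, obtained by
tracing out the other `k` qudits. -/
noncomputable def rhoEle (d k m : ℕ) : Matrix (Fin d) (Fin d) ℂ :=
  Matrix.of fun a b =>
    ∑ r : Fin k → Fin d, eleAmp d k m a r * (starRingEnd ℂ) (eleAmp d k m b r)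

lemma orderOf_omega (d : ℕ) (hd : 2 ≤ d) : orderOf (omega d) = d := by
  have h := Complex.isPrimitiveRoot_exp d (by omega)
  rw [omega]
  exact (h.eq_orderOf).symm

lemma orderOf_zeta (d m : ℕ) (hd : 2 ≤ d) :
    orderOf (omega d ^ m) = d / Nat.gcd d m := by
  rcases Nat.eq_zero_or_pos m with rfl | hm
  · simp [Nat.gcd_zero_right, Nat.div_self (by omega : 0 < d)]
  · rw [orderOf_pow' _ hm.ne', orderOf_omega d hd]

open scoped ComplexOrder in
/-- for the elementary `n`-qudit hypergraph state with hyperedge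
multiplicity `m` (here `n = k+1 ≥ 2`), the reduced density matrix of any single
qudit has rank `d / gcd(d, m)`. -/
theorem stmt14 (d k m : ℕ) (hd : 2 ≤ d) (hk : 1 ≤ k) :
    (rhoEle d k m).rank = d / Nat.gcd d m := by
  set d' : ℕ := d / Nat.gcd d m with hd'
  set ζ : ℂ := omega d ^ m with hζ
  have hdpos : 0 < d := by omega
  have hgpos : 0 < Nat.gcd d m := Nat.gcd_pos_of_pos_left m hdpos
  have hd'pos : 0 < d' := Nat.div_pos (Nat.le_of_dvd hdpos (Nat.gcd_dvd_left d m)) hgpos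
  have hd'le : d' ≤ d := Nat.div_le_self d _
  have hord : orderOf ζ = d' := orderOf_zeta d m hd
  have hζd' : ζ ^ d' = 1 := by rw [← hord]; exact pow_orderOf_eq_one ζ
  -- ζ^x depends only on x mod d'
  have hmod : ∀ x : ℕ, ζ ^ x = ζ ^ (x % d') := by
    intro x
    conv_lhs => rw [← Nat.div_add_mod x d']
    rw [pow_add, pow_mul, hζd', one_pow, one_mul]
  -- the normalization constant
  set c : ℂ := ((Real.sqrt ((d : ℝ) ^ (k + 1)) : ℝ) : ℂ) with hc
  have hcne : c ≠ 0 := by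
    simp only [hc, Complex.ofReal_ne_zero]
    positivity
  -- amplitude in terms of ζ
  have hamp : ∀ (a : Fin d) (r : Fin k → Fin d),
      eleAmp d k m a r = ζ ^ ((a : ℕ) * ∏ i, ((r i : ℕ))) / c := by
    intro a r
    rw [eleAmp, hζ, ← pow_mul, mul_assoc]
  -- the amplitude matrix
  set V : Matrix (Fin d) (Fin k → Fin d) ℂ :=
    Matrix.of fun a r => eleAmp d k m a r with hV
  have hrho : rhoEle d k m = V * V.conjTranspose := by
    ext a b
    simp [rhoEle, Matrix.mul_apply, Matrix.conjTranspose_apply, hV]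
  rw [hrho, Matrix.rank_self_mul_conjTranspose]
  -- the character matrix
  set W : Matrix (Fin d) (Fin d') ℂ :=
    Matrix.of fun a t => ζ ^ ((a : ℕ) * (t : ℕ)) with hW
  -- Upper bound: V = W * M
  have hub : V.rank ≤ d' := by
    set M : Matrix (Fin d') (Fin k → Fin d) ℂ :=
      Matrix.of fun t r => if (t : ℕ) = (∏ i, ((r i : ℕ))) % d' then c⁻¹ else 0 with hM
    have hfac : V = W * M := by
      ext a r
      rw [Matrix.mul_apply]
      rw [Finset.sum_eq_single (⟨(∏ i, ((r i : ℕ))) % d', Nat.mod_lt _ hd'pos⟩ : Fin d')]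
      · simp only [hV, hW, hM, Matrix.of_apply, if_pos rfl, if_true]
        rw [hamp, hmod ((a : ℕ) * ∏ i, ((r i : ℕ)))]
        have : ((a : ℕ) * ∏ i, ((r i : ℕ))) % d' = ((a : ℕ) * ((∏ i, ((r i : ℕ))) % d')) % d' :=
          Nat.ModEq.mul_left (a : ℕ) ((Nat.mod_modEq _ d').symm)
        rw [this, ← hmod, div_eq_mul_inv]
      · intro t _ ht
        simp only [hM, Matrix.of_apply]
        rw [if_neg (by simpa [Fin.ext_iff] using ht), mul_zero]
      · intro h; exact absurd (Finset.mem_univ _) h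
    calc V.rank = (W * M).rank := by rw [hfac]
      _ ≤ W.rank := Matrix.rank_mul_le_left W M
      _ ≤ Fintype.card (Fin d') := Matrix.rank_le_card_width W
      _ = d' := Fintype.card_fin d'
  -- Lower bound: the Vandermonde matrix S = P * (V * N)
  have hlb : d' ≤ V.rank := by
    -- special inputs: r t = (t, 1, 1, ..., 1)
    set i0 : Fin k := ⟨0, hk⟩ with hi0
    set rt : Fin d' → (Fin k → Fin d) := fun t i =>
      if i = i0 then ⟨(t : ℕ), lt_of_lt_of_le t.2 hd'le⟩ else ⟨1, by omega⟩ with hrt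
    have hprod : ∀ t : Fin d', (∏ i, (((rt t) i : ℕ))) = (t : ℕ) := by
      intro t
      rw [Finset.prod_eq_single i0]
      · simp [hrt]
      · intro i _ hi; simp [hrt, hi]
      · intro h; exact absurd (Finset.mem_univ _) h
    set N : Matrix (Fin k → Fin d) (Fin d') ℂ :=
      Matrix.of fun r t => if r = rt t then c else 0 with hN
    set P : Matrix (Fin d') (Fin d) ℂ :=
      Matrix.of fun s a => if (a : ℕ) = (s : ℕ) then 1 else 0 with hP
    have hVN : ∀ (a : Fin d) (t : Fin d'), (V * N) a t = ζ ^ ((a : ℕ) * (t : ℕ)) := by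
      intro a t
      rw [Matrix.mul_apply]
      rw [Finset.sum_eq_single (rt t)]
      · simp only [hV, hN, Matrix.of_apply, if_pos rfl, if_true]
        rw [hamp, hprod, div_mul_cancel₀ _ hcne]
      · intro r _ hr
        simp only [hN, Matrix.of_apply]
        rw [if_neg hr, mul_zero]
      · intro h; exact absurd (Finset.mem_univ _) h
    have hfac : P * (V * N) = Matrix.vandermonde (fun s : Fin d' => ζ ^ (s : ℕ)) := by
      ext s t
      rw [Matrix.mul_apply]
      rw [Finset.sum_eq_single (⟨(s : ℕ), lt_of_lt_of_le s.2 hd'le⟩ : Fin d)]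
      · simp only [hP, Matrix.of_apply, if_pos rfl, if_true, one_mul]
        rw [hVN, Matrix.vandermonde_apply]
        show ζ ^ ((s : ℕ) * (t : ℕ)) = (ζ ^ (s : ℕ)) ^ (t : ℕ)
        rw [pow_mul]
      · intro a _ ha
        simp only [hP, Matrix.of_apply]
        rw [if_neg (by simpa [Fin.ext_iff] using ha), zero_mul]
      · intro h; exact absurd (Finset.mem_univ _) h
    have hdet : (Matrix.vandermonde (fun s : Fin d' => ζ ^ (s : ℕ))).det ≠ 0 := by
      rw [Matrix.det_vandermonde]
      apply Finset.prod_ne_zero_iff.mpr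
      intro i _
      apply Finset.prod_ne_zero_iff.mpr
      intro j hj
      rw [Finset.mem_Ioi] at hj
      rw [sub_ne_zero]
      intro hij
      have := pow_injOn_Iio_orderOf (x := ζ)
        (by rw [hord]; exact Set.mem_Iio.mpr (lt_of_lt_of_le j.2 le_rfl))
        (by rw [hord]; exact Set.mem_Iio.mpr (lt_of_lt_of_le i.2 le_rfl)) hij
      exact absurd (Fin.ext this) hj.ne'
    have hrankS : (Matrix.vandermonde (fun s : Fin d' => ζ ^ (s : ℕ))).rank = d' := by
      rw [Matrix.rank_of_isUnit _ ((Matrix.isUnit_iff_isUnit_det _).mpr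
        (isUnit_iff_ne_zero.mpr hdet)), Fintype.card_fin]
    calc d' = (Matrix.vandermonde (fun s : Fin d' => ζ ^ (s : ℕ))).rank := hrankS.symm
      _ = (P * (V * N)).rank := by rw [hfac]
      _ ≤ (V * N).rank := Matrix.rank_mul_le_right P (V * N)
      _ ≤ V.rank := Matrix.rank_mul_le_left V N
  omega
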